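/- In a commutative ring, for elements Ω_{αβ} and ω_α (1 ≤ α, β ≤ 2m) in an exterior-algebra-like setting where the ω_α have odd degree and the Ω_{αβ} have even degree, the sum over permutations α of S_{2m} of ε(α) (Ω_{α₁α₂} − ω_{α₁}ω_{α₂})···(Ω_{α_{2m-1}α_{2m}} − ω_{α_{2m-1}}ω_{α_{2m}}) equals the sum over k from 0 to m of binomial(m,k)·(−1)^{m−k} times the sum over permutations α of ε(α) Ω_{α₁α₂}···Ω_{α_{2k-1}α_{2k}} ω_{α_{2k+1}}···ω_{α_{2m}}. -/

import Mathlib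

/-!
Even-degree elements of an exterior algebra are central, so the `Ω_{ab}` and the products
`ω_a ω_b` all lie in the centre, a commutative ring. There the product of the `m` binomials
`Ω - ωω` expands into `2^m` terms, indexed by the set `s` of factors that contribute `Ω`.
Permuting the `m` pairs `{2i, 2i+1}` among themselves is an even permutation of `Fin (2m)`,
so after alternating over `σ` the term of `s` depends only on `#s`. There are `choose m k`
sets of size `k`, and `s = {0, …, k-1}` gives the `k`-th summand of the right-hand side.
-/

open Equiv Finset

namespace ExteriorAlgebra

variable {R M : Type*} [CommRing R] [AddCommGroup M] [Module R M]

theorem ι_mul_of_mem_exteriorPower (v : M) {p : ℕ} {x : ExteriorAlgebra R M}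
    (hx : x ∈ ⋀[R]^p M) : ι R v * x = (-1 : ℤ) ^ p • (x * ι R v) := by
  induction hx using Submodule.pow_induction_on_left' with
  | algebraMap r => simp [Algebra.commutes]
  | add x y i _ _ ihx ihy => rw [mul_add, ihx, ihy, add_mul, smul_add]
  | mem_mul w hw i x _ ih =>
    obtain ⟨u, rfl⟩ := hw
    have hanti : ι R v * ι R u = -(ι R u * ι R v) :=
      eq_neg_of_add_eq_zero_left (ι_add_mul_swap v u)
    rw [← mul_assoc, hanti, neg_mul, mul_assoc, ih, mul_smul_comm, pow_succ', mul_smul,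
      neg_one_smul, ← mul_assoc]

theorem mem_center_of_mem_exteriorPower {p : ℕ} (hp : Even p) {x : ExteriorAlgebra R M}
    (hx : x ∈ ⋀[R]^p M) : x ∈ Subalgebra.center R (ExteriorAlgebra R M) := by
  rw [Subalgebra.mem_center_iff]
  intro y
  induction y using ExteriorAlgebra.induction with
  | algebraMap r => exact Algebra.commutes r x
  | ι v => rw [ι_mul_of_mem_exteriorPower v hx, hp.neg_one_pow, one_smul]
  | mul y z hy hz => rw [mul_assoc, hz, ← mul_assoc, hy, mul_assoc]
  | add y z hy hz => rw [add_mul, hy, hz, mul_add]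

end ExteriorAlgebra

theorem Fintype.prod_sub_eq_sum_prod_ite {ι R : Type*} [Fintype ι] [DecidableEq ι] [CommRing R]
    (f g : ι → R) : ∏ i, (f i - g i) = ∑ s : Finset ι, ∏ i, if i ∈ s then f i else -g i := by
  simp only [sub_eq_add_neg, Fintype.prod_add]
  refine Fintype.sum_congr _ _ fun s => ?_
  rw [← prod_mul_prod_compl s, prod_ite_of_true (fun _ h => h),
    prod_ite_of_false (fun _ h => mem_compl.mp h)]

theorem List.prod_ofFn_eq_prod_ofFn_pairs {M : Type*} [Monoid M] {N n : ℕ} (h : N = 2 * n)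
    (g : Fin N → M) :
    (List.ofFn g).prod =
      (List.ofFn fun j : Fin n => g ⟨2 * j, by omega⟩ * g ⟨2 * j + 1, by omega⟩).prod := by
  subst h
  rw [List.ofFn_mul', List.prod_flatten, List.map_ofFn]
  simp [List.ofFn_succ, Function.comp_def]

section PairBlocks

variable {m : ℕ}

def finPairEquiv (m : ℕ) : Fin m × Fin 2 ≃ Fin (2 * m) :=
  finProdFinEquiv.trans (finCongr (mul_comm m 2))

theorem finPairEquiv_apply (i : Fin m) (r : Fin 2) :
    finPairEquiv m (i, r) = ⟨2 * i + r, by omega⟩ := by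
  ext
  simp [finPairEquiv, finProdFinEquiv, add_comm]

def blockPerm (π : Perm (Fin m)) : Perm (Fin (2 * m)) :=
  (finPairEquiv m).permCongr (prodCongrLeft fun _ => π)

theorem blockPerm_apply (π : Perm (Fin m)) (i : Fin m) (r : Fin 2) :
    blockPerm π ⟨2 * i + r, by omega⟩ = ⟨2 * π i + r, by omega⟩ := by
  rw [← finPairEquiv_apply, blockPerm, permCongr_apply, symm_apply_apply, prodCongrLeft_apply,
    finPairEquiv_apply]

theorem sign_blockPerm (π : Perm (Fin m)) : Perm.sign (blockPerm π) = 1 := by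
  simp [blockPerm, Perm.sign_permCongr, Perm.sign_prodCongrLeft]

def pairAt (σ : Perm (Fin (2 * m))) (i : Fin m) : Fin (2 * m) × Fin (2 * m) :=
  (σ ⟨2 * i, by omega⟩, σ ⟨2 * i + 1, by omega⟩)

theorem pairAt_mul_blockPerm (σ : Perm (Fin (2 * m))) (π : Perm (Fin m)) :
    pairAt (σ * blockPerm π) = pairAt σ ∘ π := by
  funext i
  have h0 := blockPerm_apply π i 0
  have h1 := blockPerm_apply π i 1
  simp only [Fin.val_zero, Fin.val_one, add_zero] at h0 h1
  simp only [pairAt, Function.comp_apply, Perm.mul_apply, h0, h1]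

theorem sum_sign_smul_pairAt_comp {M : Type*} [AddCommGroup M]
    (F : (Fin m → Fin (2 * m) × Fin (2 * m)) → M) (π : Perm (Fin m)) :
    ∑ σ : Perm (Fin (2 * m)), (Perm.sign σ : ℤ) • F (pairAt σ ∘ π) =
      ∑ σ : Perm (Fin (2 * m)), (Perm.sign σ : ℤ) • F (pairAt σ) := by
  refine Fintype.sum_equiv (Equiv.mulRight (blockPerm π)) _ _ fun σ => ?_
  simp [pairAt_mul_blockPerm, sign_blockPerm]

end PairBlocks

section AlternatingExpansion

open scoped Pointwise

variable {m : ℕ} {C : Type*} [CommRing C] (a b : Fin (2 * m) × Fin (2 * m) → C)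

def altMixedSum (s : Finset (Fin m)) : C :=
  ∑ σ : Perm (Fin (2 * m)), (Perm.sign σ : ℤ) •
    ∏ i, if i ∈ s then a (pairAt σ i) else -b (pairAt σ i)

theorem altMixedSum_smul (π : Perm (Fin m)) (s : Finset (Fin m)) :
    altMixedSum a b (π • s) = altMixedSum a b s := by
  refine .trans ?_ (sum_sign_smul_pairAt_comp
    (fun p => ∏ i, if i ∈ s then a (p i) else -b (p i)) π)
  refine Fintype.sum_congr _ _ fun σ => ?_
  rw [← Equiv.prod_comp π]
  simp only [Function.comp_apply, ← Perm.smul_def, Finset.smul_mem_smul_finset_iff]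

theorem altMixedSum_eq_of_card_eq {s t : Finset (Fin m)} (h : s.card = t.card) :
    altMixedSum a b s = altMixedSum a b t := by
  obtain ⟨π, hπ⟩ := (Set.powersetCard.isPretransitive (α := Fin m) (n := t.card)).exists_smul_eq
    ⟨s, h⟩ ⟨t, rfl⟩
  have hπs : π • s = t := by simpa using congrArg Subtype.val hπ
  rw [← hπs, altMixedSum_smul]

theorem altMixedSum_filter_lt {k : ℕ} (hk : k ≤ m) :
    altMixedSum a b {i | (i : ℕ) < k} = (-1 : ℤ) ^ (m - k) •
      ∑ σ : Perm (Fin (2 * m)), (Perm.sign σ : ℤ) •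
        ((∏ i : Fin k, a (pairAt σ (Fin.castLE hk i))) *
          ∏ j : Fin (m - k), b (pairAt σ ⟨k + j, by omega⟩)) := by
  rw [altMixedSum, Finset.smul_sum]
  refine Fintype.sum_congr _ _ fun σ => ?_
  rw [smul_comm, ← Fin.prod_congr' _ (Nat.add_sub_cancel' hk), Fin.prod_univ_add]
  simp only [Finset.mem_filter, mem_univ, true_and, Fin.val_cast, Fin.val_castAdd, Fin.is_lt,
    if_true, Fin.val_natAdd, add_lt_iff_neg_left, not_lt_zero, if_false, Finset.prod_neg,
    card_univ, Fintype.card_fin]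
  rw [mul_left_comm, zsmul_eq_mul (n := (-1) ^ (m - k))]
  push_cast
  rfl

theorem sum_sign_smul_prod_pairAt_sub :
    ∑ σ : Perm (Fin (2 * m)), (Perm.sign σ : ℤ) • ∏ i, (a (pairAt σ i) - b (pairAt σ i)) =
      ∑ k : Fin (m + 1), ((m.choose k : ℤ) * (-1) ^ (m - (k : ℕ))) •
        ∑ σ : Perm (Fin (2 * m)), (Perm.sign σ : ℤ) •
          ((∏ i : Fin k, a (pairAt σ (Fin.castLE k.is_le i))) *
            ∏ j : Fin (m - k), b (pairAt σ ⟨k + j, by omega⟩)) := by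
  calc _ = ∑ s : Finset (Fin m), altMixedSum a b s := by
        simp only [Fintype.prod_sub_eq_sum_prod_ite, Finset.smul_sum, altMixedSum]
        exact Finset.sum_comm
    _ = ∑ s ∈ (univ : Finset (Fin m)).powerset, altMixedSum a b {i | (i : ℕ) < s.card} := by
        rw [Finset.powerset_univ]
        refine Fintype.sum_congr _ _ fun s => altMixedSum_eq_of_card_eq a b ?_
        rw [Fin.card_filter_val_lt, min_eq_right (card_le_univ s |>.trans_eq (Fintype.card_fin m))]
    _ = _ := by
        rw [Finset.sum_powerset_apply_card (fun n => altMixedSum a b {i : Fin m | (i : ℕ) < n}),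
          card_univ, Fintype.card_fin, ← Fin.sum_univ_eq_sum_range]
        refine Fintype.sum_congr _ _ fun k => ?_
        rw [altMixedSum_filter_lt a b k.is_le, mul_smul, natCast_zsmul]

theorem sum_sign_smul_prod_ofFn_map_pairAt_sub {A F : Type*} [Ring A] [FunLike F C A]
    [RingHomClass F C A] (φ : F) :
    ∑ σ : Perm (Fin (2 * m)), (Perm.sign σ : ℤ) •
      (List.ofFn fun i => φ (a (pairAt σ i)) - φ (b (pairAt σ i))).prod =
      ∑ k : Fin (m + 1), ((m.choose k : ℤ) * (-1) ^ (m - (k : ℕ))) •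
        ∑ σ : Perm (Fin (2 * m)), (Perm.sign σ : ℤ) •
          ((List.ofFn fun i : Fin k => φ (a (pairAt σ (Fin.castLE k.is_le i)))).prod *
            (List.ofFn fun j : Fin (m - k) => φ (b (pairAt σ ⟨k + j, by omega⟩))).prod) := by
  have h := congrArg φ (sum_sign_smul_prod_pairAt_sub a b)
  simp only [← List.prod_ofFn, map_sum, map_zsmul, map_mul, map_list_prod, List.map_ofFn,
    Function.comp_def, map_sub] at h
  exact h

end AlternatingExpansion

/-- The multinomial-expansion identity underlying Chern's Gauss equation computation: for
even-degree elements `Ω_{αβ}` and odd-degree elements `ω_α` (`1 ≤ α,β ≤ 2m`) of the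
exterior algebra of a real vector space,
`Σ_σ ε(σ)(Ω_{σ₁σ₂} − ω_{σ₁}ω_{σ₂})···(Ω_{σ_{2m-1}σ_{2m}} − ω_{σ_{2m-1}}ω_{σ_{2m}})
 = Σ_{k=0}^m C(m,k)(−1)^{m−k} Σ_σ ε(σ) Ω_{σ₁σ₂}···Ω_{σ_{2k-1}σ_{2k}} ω_{σ_{2k+1}}···ω_{σ_{2m}}`. -/
theorem gauss_equation_multinomial (m : ℕ) {V : Type*} [AddCommGroup V] [Module ℝ V]
    (Ω : Fin (2 * m) → Fin (2 * m) → ExteriorAlgebra ℝ V)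
    (ω : Fin (2 * m) → ExteriorAlgebra ℝ V)
    (hΩ : ∀ a b, ∃ p : ℕ, Even p ∧ Ω a b ∈ ⋀[ℝ]^p V)
    (hω : ∀ a, ∃ p : ℕ, Odd p ∧ ω a ∈ ⋀[ℝ]^p V) :
    ∑ σ : Perm (Fin (2 * m)), (Perm.sign σ : ℤ) •
      (List.ofFn fun i : Fin m =>
        Ω (σ ⟨2 * i, by have := i.isLt; omega⟩) (σ ⟨2 * i + 1, by have := i.isLt; omega⟩) -
          ω (σ ⟨2 * i, by have := i.isLt; omega⟩) *
            ω (σ ⟨2 * i + 1, by have := i.isLt; omega⟩)).prod =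
    ∑ k : Fin (m + 1), ((m.choose k : ℤ) * (-1) ^ (m - (k : ℕ))) •
      ∑ σ : Perm (Fin (2 * m)), (Perm.sign σ : ℤ) •
        ((List.ofFn fun i : Fin (k : ℕ) =>
            Ω (σ ⟨2 * i, by have := i.isLt; have := k.isLt; omega⟩)
              (σ ⟨2 * i + 1, by have := i.isLt; have := k.isLt; omega⟩)).prod *
          (List.ofFn fun j : Fin (2 * m - 2 * (k : ℕ)) =>
            ω (σ ⟨2 * (k : ℕ) + j, by have := j.isLt; have := k.isLt; omega⟩)).prod) := by
  have hΩZ : ∀ a b, Ω a b ∈ Subalgebra.center ℝ (ExteriorAlgebra ℝ V) := fun a b => by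
    obtain ⟨p, hp, h⟩ := hΩ a b
    exact ExteriorAlgebra.mem_center_of_mem_exteriorPower hp h
  have hωZ : ∀ a b, ω a * ω b ∈ Subalgebra.center ℝ (ExteriorAlgebra ℝ V) := fun a b => by
    obtain ⟨p, hp, ha⟩ := hω a
    obtain ⟨q, hq, hb⟩ := hω b
    exact ExteriorAlgebra.mem_center_of_mem_exteriorPower (hp.add_odd hq)
      (SetLike.mul_mem_graded ha hb)
  have key := sum_sign_smul_prod_ofFn_map_pairAt_sub
    (fun p => (⟨Ω p.1 p.2, hΩZ _ _⟩ : Subalgebra.center ℝ (ExteriorAlgebra ℝ V)))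
    (fun p => ⟨ω p.1 * ω p.2, hωZ _ _⟩) (Subalgebra.center ℝ (ExteriorAlgebra ℝ V)).val
  simp only [Subalgebra.coe_val, pairAt, Fin.val_castLE, mul_add] at key
  rw [key]
  refine Fintype.sum_congr _ _ fun k => congrArg _ (Fintype.sum_congr _ _ fun σ => ?_)
  rw [List.prod_ofFn_eq_prod_ofFn_pairs (n := m - k) (by omega)
    (fun j : Fin (2 * m - 2 * k) => ω (σ ⟨2 * k + j, by omega⟩))]
  simp only [add_assoc]
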